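/- Let A, B, C be n×n positive definite complex matrices such that (A^{1/2} B A^{1/2})^{1/2} A^{-1} (A^{1/2} C A^{1/2})^{1/2} is Hermitian. If B ≤ C in the Loewner order, then A ◇_t B ⪯ A ◇_t C in the near-order for every t ∈ (0, 1]. -/

import Mathlib

open Matrix
open scoped ComplexOrder

/-- Real power of a matrix via functional calculus on the spectrum (junk value
if the matrix is not Hermitian). -/
noncomputable def mrpow {n : ℕ} (A : Matrix (Fin n) (Fin n) ℂ) (r : ℝ) :
    Matrix (Fin n) (Fin n) ℂ :=
  if hA : A.IsHermitian then
    (hA.eigenvectorUnitary : Matrix (Fin n) (Fin n) ℂ) *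
      diagonal (fun i => ((hA.eigenvalues i ^ r : ℝ) : ℂ)) *
      (star (hA.eigenvectorUnitary : Matrix (Fin n) (Fin n) ℂ))
  else A

/-- The metric geometric mean `A # B = A^{1/2} (A^{-1/2} B A^{-1/2})^{1/2} A^{1/2}`. -/
noncomputable def sharp {n : ℕ} (A B : Matrix (Fin n) (Fin n) ℂ) :
    Matrix (Fin n) (Fin n) ℂ :=
  mrpow A (1/2) * mrpow (mrpow A (-(1/2)) * B * mrpow A (-(1/2))) (1/2) * mrpow A (1/2)

/-- The Loewner order `A ≤ B`, i.e. `B - A` is positive semidefinite. -/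
def loewnerLE {n : ℕ} (A B : Matrix (Fin n) (Fin n) ℂ) : Prop := (B - A).PosSemidef

/-- The near-order `A ⪯ B`, i.e. `A⁻¹ # B ≥ I` in the Loewner order. -/
def nearLE {n : ℕ} (A B : Matrix (Fin n) (Fin n) ℂ) : Prop := loewnerLE 1 (sharp A⁻¹ B)

/-- The Wasserstein mean `A ◇ₜ B = [(1-t)I + t(A⁻¹ # B)] A [(1-t)I + t(A⁻¹ # B)]`. -/
noncomputable def wassersteinMean {n : ℕ} (t : ℝ) (A B : Matrix (Fin n) (Fin n) ℂ) :
    Matrix (Fin n) (Fin n) ℂ :=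
  ((1 - t) • (1 : Matrix (Fin n) (Fin n) ℂ) + t • sharp A⁻¹ B) * A *
    ((1 - t) • (1 : Matrix (Fin n) (Fin n) ℂ) + t • sharp A⁻¹ B)

/-!
Write `a = A^{1/2}`. Then `A⁻¹ # B = a⁻¹ (a B a)^{1/2} a⁻¹`, so the Hermiticity hypothesis says
precisely that `S_B = A⁻¹ # B` and `S_C = A⁻¹ # C` commute, and operator monotonicity of the square
root gives `S_B ≤ S_C`. Hence `M_B = (1-t) I + t S_B` and `M_C = (1-t) I + t S_C` commute and
satisfy `0 < M_B ≤ M_C`, while `A ◇_t B = M_B A M_B` and `A ◇_t C = M_C A M_C`.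
Now `P⁻¹ # Q` is the unique positive solution `X` of the Riccati equation `X P X = Q`; for
`P = M_B A M_B` and `Q = M_C A M_C` it is `X = M_B⁻¹ M_C`, and `X - I = M_B⁻¹ (M_C - M_B)` is a
product of commuting positive semidefinite matrices.
-/

open scoped MatrixOrder

variable {n : ℕ} {A B C P Q X M N U : Matrix (Fin n) (Fin n) ℂ}

lemma Matrix.PosDef.sqrt (hA : A.PosDef) : (CFC.sqrt A).PosDef :=
  (IsStrictlyPositive.sqrt A hA.isStrictlyPositive).posDef

lemma Matrix.PosDef.mul_mul_self_of_isHermitian (hA : A.PosDef) (hU : U.IsHermitian)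
    (hUu : IsUnit U) : (U * A * U).PosDef := by
  simpa only [hU.eq] using hA.mul_mul_conjTranspose_same (vecMul_injective_iff_isUnit.mpr hUu)

lemma mrpow_eq_rpow (hA : 0 ≤ A) (r : ℝ) : mrpow A r = A ^ r := by
  rw [CFC.rpow_eq_cfc_real, hA.posSemidef.1.cfc_eq, IsHermitian.cfc, mrpow, dif_pos]
  rfl

lemma mrpow_half_eq_sqrt (hA : 0 ≤ A) : mrpow A (1/2) = CFC.sqrt A := by
  rw [mrpow_eq_rpow hA, CFC.sqrt_eq_rpow]

lemma mrpow_neg (hA : A.PosDef) (r : ℝ) : mrpow A (-r) = (mrpow A r)⁻¹ := by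
  rcases eq_or_ne r 0 with rfl | hr
  · simp [mrpow_eq_rpow hA.posSemidef.nonneg, CFC.rpow_zero A hA.posSemidef.nonneg]
  rw [mrpow_eq_rpow hA.posSemidef.nonneg, mrpow_eq_rpow hA.posSemidef.nonneg,
    nonsing_inv_eq_ringInverse, CFC.inverse_rpow A r hr hA.isStrictlyPositive]

lemma mrpow_inv_half_eq_inv_sqrt (hA : A.PosDef) : mrpow A⁻¹ (1/2) = (CFC.sqrt A)⁻¹ := by
  rw [mrpow_half_eq_sqrt hA.inv.posSemidef.nonneg, hA.posSemidef.inv_sqrt]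

lemma mrpow_inv_neg_half_eq_sqrt (hA : A.PosDef) : mrpow A⁻¹ (-(1/2)) = CFC.sqrt A := by
  rw [mrpow_neg hA.inv, mrpow_inv_half_eq_inv_sqrt hA,
    nonsing_inv_nonsing_inv _ ((isUnit_iff_isUnit_det _).mp hA.sqrt.isUnit)]

lemma sharp_inv_eq_of_mul_mul_eq (hP : P.PosDef) (hX : 0 ≤ X) (h : X * P * X = Q) :
    sharp P⁻¹ Q = X := by
  set p := CFC.sqrt P
  have hp : p.PosDef := hP.sqrt
  have hunit := (isUnit_iff_isUnit_det p).mp hp.isUnit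
  have hpXp : 0 ≤ p * X * p := hp.1.isSelfAdjoint.conjugate_nonneg hX
  have hsq : (p * X * p) * (p * X * p) = p * Q * p := by
    rw [← h, ← CFC.sqrt_mul_sqrt_self P hP.posSemidef.nonneg]
    simp only [p, mul_assoc]
  have hroot : mrpow (p * Q * p) (1/2) = p * X * p := by
    rw [mrpow_half_eq_sqrt (hsq ▸ hpXp.isSelfAdjoint.mul_self_nonneg), CFC.sqrt_unique hsq hpXp]
  rw [sharp, mrpow_inv_half_eq_inv_sqrt hP, mrpow_inv_neg_half_eq_sqrt hP, hroot]
  calc p⁻¹ * (p * X * p) * p⁻¹ = (p⁻¹ * p) * X * (p * p⁻¹) := by simp only [mul_assoc]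
    _ = X := by rw [nonsing_inv_mul _ hunit, mul_nonsing_inv _ hunit, one_mul, mul_one]

lemma sharp_inv_eq (hA : A.PosDef) (hB : 0 ≤ B) :
    sharp A⁻¹ B =
      (CFC.sqrt A)⁻¹ * CFC.sqrt (CFC.sqrt A * B * CFC.sqrt A) * (CFC.sqrt A)⁻¹ := by
  set a := CFC.sqrt A
  have ha : a.PosDef := hA.sqrt
  have hunit := (isUnit_iff_isUnit_det a).mp ha.isUnit
  set s := CFC.sqrt (a * B * a)
  have hss : s * s = a * B * a :=
    CFC.sqrt_mul_sqrt_self (a * B * a) (ha.1.isSelfAdjoint.conjugate_nonneg hB)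
  refine sharp_inv_eq_of_mul_mul_eq hA
    (ha.inv.1.isSelfAdjoint.conjugate_nonneg (CFC.sqrt_nonneg _)) ?_
  calc a⁻¹ * s * a⁻¹ * A * (a⁻¹ * s * a⁻¹)
      = a⁻¹ * s * (a⁻¹ * a) * (a * a⁻¹) * s * a⁻¹ := by
        rw [← CFC.sqrt_mul_sqrt_self A hA.posSemidef.nonneg]
        simp only [a, mul_assoc]
    _ = a⁻¹ * (s * s) * a⁻¹ := by
        rw [nonsing_inv_mul _ hunit, mul_nonsing_inv _ hunit, mul_one, mul_one, mul_assoc a⁻¹ s]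
    _ = (a⁻¹ * a) * B * (a * a⁻¹) := by
        rw [hss]
        simp only [mul_assoc]
    _ = B := by rw [nonsing_inv_mul _ hunit, mul_nonsing_inv _ hunit, one_mul, mul_one]

lemma Matrix.PosDef.sharp_inv (hA : A.PosDef) (hB : B.PosDef) : (sharp A⁻¹ B).PosDef := by
  have ha : (CFC.sqrt A).PosDef := hA.sqrt
  rw [sharp_inv_eq hA hB.posSemidef.nonneg]
  exact (hB.mul_mul_self_of_isHermitian ha.1 ha.isUnit).sqrt.mul_mul_self_of_isHermitian
    ha.inv.1 ha.inv.isUnit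

-- `CFC.sqrt_le_sqrt` is proved for C⋆-algebras, so it needs the operator norm on matrices.
open scoped Matrix.Norms.L2Operator in
lemma sharp_inv_le_sharp_inv (hA : A.PosDef) (hB : 0 ≤ B) (hBC : B ≤ C) :
    sharp A⁻¹ B ≤ sharp A⁻¹ C := by
  have ha : (CFC.sqrt A).PosDef := hA.sqrt
  rw [sharp_inv_eq hA hB, sharp_inv_eq hA (hB.trans hBC)]
  exact ha.inv.1.isSelfAdjoint.conjugate_le_conjugate
    (CFC.sqrt_le_sqrt _ _ (ha.1.isSelfAdjoint.conjugate_le_conjugate hBC))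

lemma commute_sharp_inv_of_isHermitian (hA : A.PosDef) (hB : 0 ≤ B) (hC : 0 ≤ C)
    (hherm : (mrpow (mrpow A (1/2) * B * mrpow A (1/2)) (1/2) * A⁻¹ *
      mrpow (mrpow A (1/2) * C * mrpow A (1/2)) (1/2)).IsHermitian) :
    Commute (sharp A⁻¹ B) (sharp A⁻¹ C) := by
  set a := CFC.sqrt A
  have ha : a.PosDef := hA.sqrt
  have hnonneg : ∀ {D}, 0 ≤ D → 0 ≤ sharp A⁻¹ D := fun hD => by
    rw [sharp_inv_eq hA hD]
    exact ha.inv.1.isSelfAdjoint.conjugate_nonneg (CFC.sqrt_nonneg _)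
  have hinv : a⁻¹ * a⁻¹ = A⁻¹ := by
    rw [← Matrix.mul_inv_rev, CFC.sqrt_mul_sqrt_self A hA.posSemidef.nonneg]
  rw [mrpow_half_eq_sqrt hA.posSemidef.nonneg,
    mrpow_half_eq_sqrt (ha.1.isSelfAdjoint.conjugate_nonneg hB),
    mrpow_half_eq_sqrt (ha.1.isSelfAdjoint.conjugate_nonneg hC), ← hinv] at hherm
  refine ((hnonneg hB).isSelfAdjoint.commute_iff (hnonneg hC).isSelfAdjoint).mpr ?_
  rw [sharp_inv_eq hA hB, sharp_inv_eq hA hC]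
  convert hherm.isSelfAdjoint.conjugate_self ha.inv.1.isSelfAdjoint using 1
  simp only [a, mul_assoc]

lemma nearLE_mul_mul_of_commute (hA : A.PosDef) (hM : M.PosDef) (hMN : M ≤ N)
    (hcomm : Commute M N) : nearLE (M * A * M) (N * A * N) := by
  have hunit := (isUnit_iff_isUnit_det M).mp hM.isUnit
  have hcomm' : Commute M⁻¹ (N - M) := by
    obtain ⟨u, rfl⟩ := hM.isUnit
    rw [← coe_units_inv]
    exact (hcomm.sub_right (Commute.refl _)).units_inv_left
  have hle : 1 ≤ M⁻¹ * N := by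
    rw [← sub_nonneg, show M⁻¹ * N - 1 = M⁻¹ * (N - M) by rw [mul_sub, nonsing_inv_mul _ hunit]]
    exact hcomm'.mul_nonneg hM.inv.posSemidef.nonneg (sub_nonneg.mpr hMN)
  have hriccati : M⁻¹ * N * (M * A * M) * (M⁻¹ * N) = N * A * N :=
    calc M⁻¹ * N * (M * A * M) * (M⁻¹ * N) = M⁻¹ * (N * M) * A * (M * M⁻¹ * N) := by
          simp only [mul_assoc]
      _ = (M⁻¹ * M) * N * A * ((M * M⁻¹) * N) := by
          rw [← hcomm.eq]
          simp only [mul_assoc]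
      _ = N * A * N := by rw [nonsing_inv_mul _ hunit, mul_nonsing_inv _ hunit, one_mul]
  rw [nearLE, loewnerLE, sharp_inv_eq_of_mul_mul_eq
    (hA.mul_mul_self_of_isHermitian hM.1 hM.isUnit) (zero_le_one.trans hle) hriccati]
  exact hle

theorem wassersteinMean_nearLE_of_loewnerLE_general {n : ℕ} (A B C : Matrix (Fin n) (Fin n) ℂ)
    (hA : A.PosDef) (hB : B.PosDef)
    (hherm : (mrpow (mrpow A (1/2) * B * mrpow A (1/2)) (1/2) * A⁻¹ *
      mrpow (mrpow A (1/2) * C * mrpow A (1/2)) (1/2)).IsHermitian)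
    (hBC : loewnerLE B C) (t : ℝ) (ht0 : 0 < t) (ht1 : t ≤ 1) :
    nearLE (wassersteinMean t A B) (wassersteinMean t A C) := by
  have hB₀ : 0 ≤ B := hB.posSemidef.nonneg
  have hS : sharp A⁻¹ B ≤ sharp A⁻¹ C := sharp_inv_le_sharp_inv hA hB₀ hBC
  have hcomm := commute_sharp_inv_of_isHermitian hA hB₀ (hB₀.trans hBC) hherm
  have hM : ((1 - t) • (1 : Matrix (Fin n) (Fin n) ℂ) + t • sharp A⁻¹ B).PosDef :=
    ((hA.sharp_inv hB).smul ht0).posSemidef_add (PosSemidef.one.smul (sub_nonneg.mpr ht1))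
  refine nearLE_mul_mul_of_commute hA hM (by gcongr) ?_
  exact ((Commute.one_left _).smul_left _).add_left
    ((((Commute.one_right _).smul_left _).smul_right _).add_right
      ((hcomm.smul_left t).smul_right t))

theorem wassersteinMean_nearLE_of_loewnerLE {n : ℕ} (A B C : Matrix (Fin n) (Fin n) ℂ)
    (hA : A.PosDef) (hB : B.PosDef) (hC : C.PosDef)
    (hherm : (mrpow (mrpow A (1/2) * B * mrpow A (1/2)) (1/2) * A⁻¹ *
      mrpow (mrpow A (1/2) * C * mrpow A (1/2)) (1/2)).IsHermitian)
    (hBC : loewnerLE B C) (t : ℝ) (ht0 : 0 < t) (ht1 : t ≤ 1) :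
    nearLE (wassersteinMean t A B) (wassersteinMean t A C) :=
  wassersteinMean_nearLE_of_loewnerLE_general A B C hA hB hherm hBC t ht0 ht1
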